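/- The unsplitting number 𝔯 equals the 3-unsplitting number 𝔯₃. -/

import Mathlib

open Cardinal

/-- The norm of a relation triple. -/
noncomputable def rnorm {α β : Type} (A : α → β → Prop) : Cardinal :=
  sInf { c | ∃ Z : Set β, (∀ x : α, ∃ z ∈ Z, A x z) ∧ c = #Z }

/-- `f` is almost constant on `Y`: constant on `Y \ F` for some finite `F`. -/
def AlmostConstOn {k : ℕ} (f : ℕ → Fin k) (Y : Set ℕ) : Prop :=
  ∃ c : Fin k, { n ∈ Y | f n ≠ c }.Finite

/-- The relation for the unsplitting number with `k` colors: `f : ℕ → Fin k`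
is almost constant on the infinite set `Y`. -/
def Rk (k : ℕ) : (ℕ → Fin k) → { Y : Set ℕ // Y.Infinite } → Prop :=
  fun f Y => AlmostConstOn f Y.1

lemma exists_ac (k : ℕ) (f : ℕ → Fin (k+1)) :
    ∃ Y : { Y : Set ℕ // Y.Infinite }, AlmostConstOn f Y.1 := by
  have : ∃ c : Fin (k+1), {n : ℕ | f n = c}.Infinite := by
    by_contra h
    push_neg at h
    have h : ∀ c : Fin (k+1), {n : ℕ | f n = c}.Finite := h
    have huniv : (Set.univ : Set ℕ) = ⋃ c : Fin (k+1), {n : ℕ | f n = c} := by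
      ext n; simp
    exact Set.infinite_univ (huniv ▸ Set.finite_iUnion h)
  obtain ⟨c, hc⟩ := this
  refine ⟨⟨_, hc⟩, c, ?_⟩
  convert Set.finite_empty
  ext n
  simp only [Set.mem_setOf_eq, Set.mem_empty_iff_false, iff_false]
  rintro ⟨h1, h2⟩; exact h2 h1

lemma rnorm_le {k : ℕ} (Z : Set { Y : Set ℕ // Y.Infinite })
    (hZ : ∀ f : ℕ → Fin k, ∃ z ∈ Z, Rk k f z) : rnorm (Rk k) ≤ #Z :=
  csInf_le' ⟨Z, hZ, rfl⟩

lemma rnorm_attained (k : ℕ) :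
    ∃ Z : Set { Y : Set ℕ // Y.Infinite },
      (∀ f : ℕ → Fin (k+1), ∃ z ∈ Z, Rk (k+1) f z) ∧ rnorm (Rk (k+1)) = #Z := by
  have hne : { c | ∃ Z : Set { Y : Set ℕ // Y.Infinite },
      (∀ x : ℕ → Fin (k+1), ∃ z ∈ Z, Rk (k+1) x z) ∧ c = #Z }.Nonempty := by
    refine ⟨#(Set.univ : Set { Y : Set ℕ // Y.Infinite }), Set.univ, fun f => ?_, rfl⟩
    obtain ⟨Y, hY⟩ := exists_ac k f
    exact ⟨Y, Set.mem_univ _, hY⟩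
  obtain ⟨Z, h1, h2⟩ := csInf_mem hne
  exact ⟨Z, h1, h2⟩

lemma witness_infinite (Z : Set { Y : Set ℕ // Y.Infinite })
    (hZ : ∀ f : ℕ → Fin 2, ∃ z ∈ Z, Rk 2 f z) : Z.Infinite := by
  by_contra hfin
  rw [Set.not_infinite] at hfin
  have step1 : ∀ n : ℕ, ∃ b : ℕ, ∀ z ∈ Z, ∃ m ∈ z.1, n ≤ m ∧ m < b := by
    intro n
    have hpt : ∀ z : Z, ∃ m, m ∈ (z : { Y : Set ℕ // Y.Infinite }).1 ∧ n < m := by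
      intro z
      obtain ⟨m, hm, hlt⟩ := (z : { Y : Set ℕ // Y.Infinite }).2.exists_gt n
      exact ⟨m, hm, hlt⟩
    choose g hg1 hg2 using hpt
    haveI := hfin.to_subtype
    obtain ⟨b0, hb0⟩ := (Set.finite_range g).bddAbove
    refine ⟨b0 + 1, fun z hz => ⟨g ⟨z, hz⟩, hg1 ⟨z, hz⟩, le_of_lt (hg2 ⟨z, hz⟩), ?_⟩⟩
    have := hb0 (Set.mem_range_self ⟨z, hz⟩)
    omega
  choose B hB using step1
  set N : ℕ → ℕ := fun j => Nat.rec 0 (fun _ prev => max (prev + 1) (B prev)) j with hNdef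
  have hNsucc : ∀ j, N (j+1) = max (N j + 1) (B (N j)) := fun j => rfl
  have hNlt : ∀ j, N j < N (j+1) := fun j => by rw [hNsucc]; omega
  have hNmono : StrictMono N := strictMono_nat_of_lt_succ hNlt
  have hNge : ∀ j, j ≤ N j := by
    intro j
    induction j with
    | zero => exact Nat.zero_le _
    | succ j ih => have := hNlt j; omega
  have hhit : ∀ j, ∀ z ∈ Z, ∃ m ∈ z.1, N j ≤ m ∧ m < N (j+1) := by
    intro j z hz
    obtain ⟨m, hm, h1, h2⟩ := hB (N j) z hz
    exact ⟨m, hm, h1, lt_of_lt_of_le h2 (by rw [hNsucc]; omega)⟩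
  classical
  set idx : ℕ → ℕ := fun m => Nat.findGreatest (fun j => N j ≤ m) m with hidx
  have hidx_eq : ∀ j m, N j ≤ m → m < N (j+1) → idx m = j := by
    intro j m h1 h2
    have hge : j ≤ idx m := Nat.le_findGreatest (le_trans (hNge j) h1) h1
    have hle : idx m ≤ j := by
      by_contra hcon
      push_neg at hcon
      have hspec : N (idx m) ≤ m :=
        Nat.findGreatest_spec (P := fun j => N j ≤ m) (le_trans (hNge j) h1) h1
      have : N (j+1) ≤ N (idx m) := hNmono.le_iff_le.2 hcon
      omega
    omega
  set f : ℕ → Fin 2 := fun m => ⟨idx m % 2, by omega⟩ with hf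
  obtain ⟨z, hz, c, hc⟩ := hZ f
  have hpick : ∀ j : ℕ, ∃ m, m ∈ z.1 ∧ N (2*j + (1 - (c:ℕ))) ≤ m ∧ m < N (2*j + (1 - (c:ℕ)) + 1) := by
    intro j
    obtain ⟨m, hm, h1, h2⟩ := hhit (2*j + (1 - (c:ℕ))) z hz
    exact ⟨m, hm, h1, h2⟩
  choose g hg1 hg2 hg3 using hpick
  have hidxg : ∀ j, idx (g j) = 2*j + (1 - (c:ℕ)) := fun j => hidx_eq _ _ (hg2 j) (hg3 j)
  have hginj : Function.Injective g := by
    intro a b hab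
    have ha := hidxg a
    rw [hab, hidxg b] at ha
    omega
  have hinf : {n ∈ z.1 | f n ≠ c}.Infinite := by
    apply Set.infinite_of_injective_forall_mem hginj
    intro j
    refine ⟨hg1 j, ?_⟩
    have h1 := hidxg j
    have hc2 : (c:ℕ) < 2 := c.isLt
    simp only [hf, ne_eq, Fin.ext_iff]
    rw [h1]
    omega
  exact hinf hc

noncomputable def emb (Y : { S : Set ℕ // S.Infinite }) : ℕ → ℕ :=
  fun n => ((Set.Infinite.natEmbedding Y.1 Y.2) n : ℕ)

lemma emb_inj (Y : { S : Set ℕ // S.Infinite }) : Function.Injective (emb Y) :=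
  fun a b h => (Set.Infinite.natEmbedding Y.1 Y.2).injective (Subtype.ext h)

lemma emb_mem (Y : { S : Set ℕ // S.Infinite }) (n : ℕ) : emb Y n ∈ Y.1 :=
  ((Set.Infinite.natEmbedding Y.1 Y.2) n).2

noncomputable def comb (Y Y' : { S : Set ℕ // S.Infinite }) : { S : Set ℕ // S.Infinite } :=
  ⟨emb Y '' Y'.1, Y'.2.image ((emb_inj Y).injOn)⟩

lemma le23 : rnorm (Rk 2) ≤ rnorm (Rk 3) := by
  obtain ⟨Z, hZ, hcard⟩ := rnorm_attained 2
  rw [hcard]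
  refine rnorm_le Z (fun f => ?_)
  obtain ⟨z, hz, c, hc⟩ := hZ (fun n => (f n).castLE (by norm_num))
  refine ⟨z, hz, ?_⟩
  by_cases hlt : (c : ℕ) < 2
  · refine ⟨⟨(c : ℕ), hlt⟩, ?_⟩
    apply Set.Finite.subset hc
    rintro n ⟨hn, hfn⟩
    refine ⟨hn, ?_⟩
    simp only [ne_eq, Fin.ext_iff, Fin.coe_castLE] at hfn ⊢
    exact hfn
  · exfalso
    apply z.2
    apply Set.Finite.subset hc
    intro n hn
    refine ⟨hn, ?_⟩
    simp only [ne_eq, Fin.ext_iff, Fin.coe_castLE]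
    have := (f n).isLt
    omega

lemma le32 : rnorm (Rk 3) ≤ rnorm (Rk 2) := by
  classical
  obtain ⟨Z, hZ, hcard⟩ := rnorm_attained 1
  have hZinf : Z.Infinite := witness_infinite Z hZ
  set Z' : Set { S : Set ℕ // S.Infinite } :=
    (fun p : _ × _ => comb p.1 p.2) '' (Z ×ˢ Z) with hZ'def
  have hcov : ∀ f : ℕ → Fin 3, ∃ z ∈ Z', Rk 3 f z := by
    intro f
    set g : ℕ → Fin 2 := fun n => if f n = 0 then 1 else 0 with hgdef
    obtain ⟨Y, hY, c, hc⟩ := hZ g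
    by_cases hcase : c = 1
    · refine ⟨comb Y Y, ⟨(Y, Y), ⟨hY, hY⟩, rfl⟩, 0, ?_⟩
      apply Set.Finite.subset hc
      rintro n ⟨hn, hfn⟩
      obtain ⟨m, hm, rfl⟩ := hn
      refine ⟨emb_mem Y m, ?_⟩
      rw [hcase]
      simp only [hgdef, ne_eq]
      rw [if_neg hfn]
      decide
    · have hc0 : c = 0 := by
        have := c.isLt
        have h1 : (c : ℕ) ≠ 1 := fun h => hcase (Fin.ext (by simpa using h))
        apply Fin.ext
        simp only [Fin.val_zero]
        omega
      subst hc0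
      set h : ℕ → Fin 2 := fun n => if f (emb Y n) = 1 then 1 else 0 with hhdef
      obtain ⟨Y', hY', c', hc'⟩ := hZ h
      by_cases hc'1 : c' = 1
      · refine ⟨comb Y Y', ⟨(Y, Y'), ⟨hY, hY'⟩, rfl⟩, 1, ?_⟩
        apply Set.Finite.subset (hc'.image (emb Y))
        rintro n ⟨hn, hfn⟩
        obtain ⟨m, hm, rfl⟩ := hn
        refine ⟨m, ⟨hm, ?_⟩, rfl⟩
        rw [hc'1]
        simp only [hhdef, ne_eq]
        rw [if_neg hfn]
        decide
      · have hc'0 : c' = 0 := by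
          have := c'.isLt
          have h1 : (c' : ℕ) ≠ 1 := fun hx => hc'1 (Fin.ext (by simpa using hx))
          apply Fin.ext
          simp only [Fin.val_zero]
          omega
        subst hc'0
        refine ⟨comb Y Y', ⟨(Y, Y'), ⟨hY, hY'⟩, rfl⟩, 2, ?_⟩
        apply Set.Finite.subset ((hc'.image (emb Y)).union hc)
        rintro n ⟨hn, hfn⟩
        obtain ⟨m, hm, rfl⟩ := hn
        by_cases h0 : f (emb Y m) = 0
        · right
          refine ⟨emb_mem Y m, ?_⟩
          simp only [hgdef, ne_eq]
          rw [if_pos h0]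
          decide
        · left
          have h1f : f (emb Y m) = 1 := by
            have hlt := (f (emb Y m)).isLt
            have e0 : ((f (emb Y m)) : ℕ) ≠ 0 := fun hx => h0 (Fin.ext (by simpa using hx))
            have e2 : ((f (emb Y m)) : ℕ) ≠ 2 := fun hx => hfn (Fin.ext (by simpa using hx))
            apply Fin.ext
            simp only [Fin.val_one]
            omega
          refine ⟨m, ⟨hm, ?_⟩, rfl⟩
          simp only [hhdef, ne_eq]
          rw [if_pos h1f]
          decide
  calc rnorm (Rk 3) ≤ #Z' := rnorm_le Z' hcov
    _ ≤ #(↥(Z ×ˢ Z)) := Cardinal.mk_image_le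
    _ = #Z * #Z := by
        rw [Cardinal.mk_congr (Equiv.Set.prod Z Z)]
        exact (Cardinal.mul_def _ _).symm
    _ = #Z := by
        haveI := hZinf.to_subtype
        exact Cardinal.mul_eq_self (Cardinal.aleph0_le_mk _)
    _ = rnorm (Rk 2) := hcard.symm

/-- 𝔯 = 𝔯₃. -/
theorem stmt18 : rnorm (Rk 2) = rnorm (Rk 3) := le_antisymm le23 le32
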